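/- arXiv:2211.10743 — 8 statements merged into one kernel-verified Lean document; each statement's English description precedes it below -/
import Mathlib

section
/- For any graph G and any vertex cover C of G, C is a distance-edge-monitoring set of G; consequently dem(G) ≤ c(G) ≤ n−1 for a connected graph G of order n. -/
open SimpleGraph

/-- A set `M` of vertices is a distance-edge-monitoring set of `G`. -/
def demSet {V : Type*} (G : SimpleGraph V) (M : Set V) : Prop :=
  ∀ e ∈ G.edgeSet, ∃ x ∈ M, ∃ y : V, G.dist x y ≠ (G.deleteEdges {e}).dist x y

/-- The distance-edge-monitoring number of `G`. -/
noncomputable def dem {V : Type*} (G : SimpleGraph V) [Fintype V] : ℕ :=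
  sInf {k | ∃ M : Finset V, M.card = k ∧ demSet G ↑M}

/-- `C` is a vertex cover of `G`. -/
def isVC {V : Type*} (G : SimpleGraph V) (C : Set V) : Prop :=
  ∀ e ∈ G.edgeSet, ∃ x ∈ C, x ∈ e

/-- The vertex cover number of `G`. -/
noncomputable def vcNum {V : Type*} (G : SimpleGraph V) [Fintype V] : ℕ :=
  sInf {k | ∃ C : Finset V, C.card = k ∧ isVC G ↑C}

lemma vc_dem {V : Type*} (G : SimpleGraph V) (C : Set V) (hC : isVC G C) :
    demSet G C := by
  intro e he
  obtain ⟨x, hxC, hxe⟩ := hC e he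
  induction e with
  | h a b =>
    have hab : G.Adj a b := he
    rcases Sym2.mem_iff.mp hxe with rfl | rfl
    · refine ⟨x, hxC, b, ?_⟩
      have h1 : G.dist x b = 1 := dist_eq_one_iff_adj.mpr hab
      have h2 : ¬ (G.deleteEdges {s(x, b)}).Adj x b := by
        simp [SimpleGraph.deleteEdges_adj]
      rw [h1]
      intro h
      exact h2 (dist_eq_one_iff_adj.mp h.symm)
    · refine ⟨x, hxC, a, ?_⟩
      have hab' : G.Adj x a := hab.symm
      have h1 : G.dist x a = 1 := dist_eq_one_iff_adj.mpr hab'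
      have h2 : ¬ (G.deleteEdges {s(a, x)}).Adj x a := by
        simp [SimpleGraph.deleteEdges_adj, Sym2.eq_swap]
      rw [h1]
      intro h
      exact h2 (dist_eq_one_iff_adj.mp h.symm)

theorem stmt_0 {V : Type*} [Fintype V] (G : SimpleGraph V) (hG : G.Connected) :
    (∀ C : Set V, isVC G C → demSet G C) ∧
    dem G ≤ vcNum G ∧ vcNum G ≤ Fintype.card V - 1 := by
  classical
  refine ⟨fun C hC => vc_dem G C hC, ?_, ?_⟩
  · -- dem ≤ vcNum
    have hne : {k | ∃ C : Finset V, C.card = k ∧ isVC G ↑C}.Nonempty := by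
      refine ⟨(Finset.univ : Finset V).card, Finset.univ, rfl, ?_⟩
      intro e he
      induction e with
      | h a b => exact ⟨a, by simp, Sym2.mem_mk_left a b⟩
    obtain ⟨C, hcard, hC⟩ := Nat.sInf_mem hne
    exact Nat.sInf_le ⟨C, hcard, vc_dem G _ hC⟩
  · -- vcNum ≤ card - 1
    obtain ⟨v⟩ := hG.nonempty
    refine Nat.sInf_le ⟨Finset.univ.erase v, ?_, ?_⟩
    · rw [Finset.card_erase_of_mem (Finset.mem_univ v), Finset.card_univ]
    · intro e he
      induction e with
      | h a b =>
        have hab : G.Adj a b := he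
        by_cases h : a = v
        · exact ⟨b, by simp [Finset.mem_erase, h ▸ hab.ne'], Sym2.mem_mk_right a b⟩
        · exact ⟨a, by simp [Finset.mem_erase, h], Sym2.mem_mk_left a b⟩
end

section
/- For a connected graph G of order n ≥ 2, dem(G) = n−1 if and only if G is the complete graph K_n. -/
open SimpleGraph

lemma demSet_of_endpoints {V : Type*} (G : SimpleGraph V) (M : Set V)
    (h : ∀ a b : V, G.Adj a b → a ∈ M ∨ b ∈ M) : demSet G M := by
  intro e he
  induction e with
  | h a b =>
    have hab : G.Adj a b := he
    have h1 : G.dist a b = 1 := SimpleGraph.dist_eq_one_iff_adj.2 hab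
    have h2 : G.dist b a = 1 := SimpleGraph.dist_eq_one_iff_adj.2 hab.symm
    have hd1 : (G.deleteEdges {s(a,b)}).dist a b ≠ 1 := by
      intro hc
      have := (SimpleGraph.dist_eq_one_iff_adj).1 hc
      rw [SimpleGraph.deleteEdges_adj] at this
      exact this.2 rfl
    have hd2 : (G.deleteEdges {s(a,b)}).dist b a ≠ 1 := by
      intro hc
      have := (SimpleGraph.dist_eq_one_iff_adj).1 hc
      rw [SimpleGraph.deleteEdges_adj] at this
      exact this.2 (Sym2.eq_swap)
    rcases h a b hab with hm | hm
    · exact ⟨a, hm, b, by rw [h1]; exact fun hc => hd1 hc.symm⟩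
    · exact ⟨b, hm, a, by rw [h2]; exact fun hc => hd2 hc.symm⟩

theorem stmt_1 {V : Type*} [Fintype V] (G : SimpleGraph V) (hG : G.Connected)
    (hn : 2 ≤ Fintype.card V) :
    dem G = Fintype.card V - 1 ↔ G = ⊤ := by
  constructor
  · intro hdem
    by_contra hne
    -- get a nonadjacent pair
    obtain ⟨u, v, huv, hadj⟩ : ∃ u v : V, u ≠ v ∧ ¬ G.Adj u v := by
      by_contra h
      push_neg at h
      apply hne
      ext a b
      simp only [SimpleGraph.top_adj]
      exact ⟨fun h' => h'.ne, fun h' => h a b h'⟩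
    classical
    set M : Finset V := Finset.univ \ {u, v} with hM
    have hcard : M.card = Fintype.card V - 2 := by
      rw [hM, Finset.card_sdiff_of_subset (Finset.subset_univ _), Finset.card_univ]
      congr 1
      rw [Finset.card_insert_of_notMem (by simpa using huv), Finset.card_singleton]
    have hmon : demSet G ↑M := by
      apply demSet_of_endpoints
      intro a b hab
      by_contra h
      push_neg at h
      obtain ⟨ha, hb⟩ := h
      have ha' : a = u ∨ a = v := by
        have := ha; simp [hM] at this; tauto
      have hb' : b = u ∨ b = v := by
        have := hb; simp [hM] at this; tauto
      rcases ha' with rfl | rfl <;> rcases hb' with rfl | rfl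
      · exact hab.ne rfl
      · exact hadj hab
      · exact hadj hab.symm
      · exact hab.ne rfl
    have hle : dem G ≤ Fintype.card V - 2 :=
      Nat.sInf_le ⟨M, hcard, hmon⟩
    rw [hdem] at hle
    omega
  · rintro rfl
    classical
    -- upper bound: univ minus one vertex monitors everything
    obtain ⟨w⟩ := Fintype.card_pos_iff.1 (by omega : 0 < Fintype.card V)
    have hmemS : (Fintype.card V - 1) ∈
        {k | ∃ M : Finset V, M.card = k ∧ demSet (⊤ : SimpleGraph V) ↑M} := by
      refine ⟨Finset.univ \ {w}, ?_, ?_⟩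
      · rw [Finset.card_sdiff_of_subset (Finset.subset_univ _), Finset.card_univ,
          Finset.card_singleton]
      · apply demSet_of_endpoints
        intro a b hab
        by_contra h
        push_neg at h
        obtain ⟨ha, hb⟩ := h
        simp at ha hb
        exact hab.ne (ha.trans hb.symm)
    have hlb : ∀ k ∈ {k | ∃ M : Finset V, M.card = k ∧ demSet (⊤ : SimpleGraph V) ↑M},
        Fintype.card V - 1 ≤ k := by
      rintro k ⟨M, rfl, hmon⟩
      by_contra hlt
      push_neg at hlt
      -- then univ \ M has ≥ 2 elements
      have hc : 2 ≤ (Finset.univ \ M).card := by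
        rw [Finset.card_sdiff_of_subset (Finset.subset_univ _), Finset.card_univ]
        omega
      obtain ⟨u, hu, v, hv, huv⟩ := Finset.one_lt_card.1 hc
      simp at hu hv
      have he : s(u,v) ∈ (⊤ : SimpleGraph V).edgeSet := by
        simpa using huv
      obtain ⟨x, hx, y, hxy⟩ := hmon _ he
      apply hxy
      have hxu : x ≠ u := fun h => hu (h ▸ hx)
      have hxv : x ≠ v := fun h => hv (h ▸ hx)
      by_cases hyx : y = x
      · subst hyx; simp [SimpleGraph.dist_self]
      · have hadj : ((⊤ : SimpleGraph V).deleteEdges {s(u,v)}).Adj x y := by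
          rw [SimpleGraph.deleteEdges_adj]
          refine ⟨by simpa using (Ne.symm hyx), ?_⟩
          simp only [Set.mem_singleton_iff, Sym2.eq, Sym2.rel_iff', Prod.mk.injEq,
            Prod.swap_prod_mk]
          push_neg
          constructor
          · intro h; exact absurd h hxu
          · intro h; exact absurd h hxv
        rw [SimpleGraph.dist_eq_one_iff_adj.2 (by simpa using Ne.symm hyx),
          SimpleGraph.dist_eq_one_iff_adj.2 hadj]
    exact le_antisymm (Nat.sInf_le hmemS) (le_csInf ⟨_, hmemS⟩ hlb)
end

section
/- For the complete bipartite graph K_{m,n} with m,n ≥ 1, dem(K_{m,n}) = min{m,n}. -/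
open SimpleGraph

lemma dist_eq_two' {V : Type*} (G : SimpleGraph V) {x y z : V} (hxy : x ≠ y)
    (hna : ¬ G.Adj x y) (h1 : G.Adj x z) (h2 : G.Adj z y) : G.dist x y = 2 := by
  have hle : G.dist x y ≤ 2 := by
    have := G.dist_le (h1.toWalk.append h2.toWalk)
    simpa using this
  have hr : G.Reachable x y := ⟨h1.toWalk.append h2.toWalk⟩
  have h0 : 0 < G.dist x y := hr.pos_dist_of_ne hxy
  have h1' : G.dist x y ≠ 1 := fun h => hna ((dist_eq_one_iff_adj (G := G)).mp h)
  omega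

lemma demSet_of_cover {V : Type*} (G : SimpleGraph V) (M : Set V)
    (h : ∀ x y, G.Adj x y → x ∈ M ∨ y ∈ M) : demSet G M := by
  have key : ∀ u v : V, G.Adj u v → u ∈ M →
      ∃ x ∈ M, ∃ y, G.dist x y ≠ (G.deleteEdges {s(u,v)}).dist x y := by
    intro u v huv hu
    refine ⟨u, hu, v, ?_⟩
    rw [(dist_eq_one_iff_adj (G := G)).mpr huv]
    intro hc
    have h2 := (SimpleGraph.dist_eq_one_iff_adj.mp hc.symm)
    rw [deleteEdges_adj] at h2
    simp at h2
  intro e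
  induction e using Sym2.ind with
  | _ u v =>
    intro he
    rw [mem_edgeSet] at he
    rcases h u v he with hu | hv
    · exact key u v he hu
    · have := key v u he.symm hv
      rwa [Sym2.eq_swap] at this

theorem stmt_2 (m n : ℕ) (hm : 1 ≤ m) (hn : 1 ≤ n) :
    dem (completeBipartiteGraph (Fin m) (Fin n)) = min m n := by
  set V := Fin m ⊕ Fin n
  set G := completeBipartiteGraph (Fin m) (Fin n) with hG
  have hmem : min m n ∈ {k | ∃ M : Finset V, M.card = k ∧ demSet G ↑M} := by
    rcases le_total m n with h | h
    · refine ⟨Finset.univ.image Sum.inl, ?_, ?_⟩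
      · rw [Finset.card_image_of_injective _ Sum.inl_injective]
        simp [min_eq_left h]
      · apply demSet_of_cover
        intro x y hxy
        rcases hxy with ⟨hx, hy⟩ | ⟨hx, hy⟩
        · left
          obtain ⟨p, rfl⟩ := Sum.isLeft_iff.mp hx
          simp
        · right
          obtain ⟨p, rfl⟩ := Sum.isLeft_iff.mp hy
          simp
    · refine ⟨Finset.univ.image Sum.inr, ?_, ?_⟩
      · rw [Finset.card_image_of_injective _ Sum.inr_injective]
        simp [min_eq_right h]
      · apply demSet_of_cover
        intro x y hxy
        rcases hxy with ⟨hx, hy⟩ | ⟨hx, hy⟩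
        · right
          obtain ⟨p, rfl⟩ := Sum.isRight_iff.mp hy
          simp
        · left
          obtain ⟨p, rfl⟩ := Sum.isRight_iff.mp hx
          simp
  refine le_antisymm (Nat.sInf_le hmem) (le_csInf ⟨_, hmem⟩ ?_)
  rintro k ⟨M, rfl, hdem⟩
  by_contra hlt
  push_neg at hlt
  -- first: M is nonempty
  rcases Nat.eq_zero_or_pos M.card with h0 | h1
  · rw [Finset.card_eq_zero] at h0
    subst h0
    obtain ⟨x, hx, -⟩ := hdem s(Sum.inl ⟨0, hm⟩, Sum.inr ⟨0, hn⟩) (by simp [hG])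
    simp at hx
  have hm2 : 2 ≤ m := by omega
  have hn2 : 2 ≤ n := by omega
  haveI : Nontrivial (Fin m) := Fin.nontrivial_iff_two_le.mpr hm2
  haveI : Nontrivial (Fin n) := Fin.nontrivial_iff_two_le.mpr hn2
  -- find a left vertex and a right vertex outside M
  have ha : ∃ a : Fin m, (Sum.inl a : V) ∉ M := by
    by_contra hc
    push_neg at hc
    have hsub : Finset.univ.image (Sum.inl : Fin m → V) ⊆ M := by
      intro x hx
      simp only [Finset.mem_image] at hx
      obtain ⟨a, -, rfl⟩ := hx
      exact hc a
    have := Finset.card_le_card hsub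
    rw [Finset.card_image_of_injective _ Sum.inl_injective] at this
    simp at this
    omega
  have hb : ∃ b : Fin n, (Sum.inr b : V) ∉ M := by
    by_contra hc
    push_neg at hc
    have hsub : Finset.univ.image (Sum.inr : Fin n → V) ⊆ M := by
      intro x hx
      simp only [Finset.mem_image] at hx
      obtain ⟨a, -, rfl⟩ := hx
      exact hc a
    have := Finset.card_le_card hsub
    rw [Finset.card_image_of_injective _ Sum.inr_injective] at this
    simp at this
    omega
  obtain ⟨a, ha⟩ := ha
  obtain ⟨b, hb⟩ := hb
  obtain ⟨x, hxM, y, hxy⟩ := hdem s(Sum.inl a, Sum.inr b) (by simp [hG])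
  set G' := G.deleteEdges {s((Sum.inl a : V), Sum.inr b)} with hG'
  have hxa : x ≠ Sum.inl a := fun h => ha (h ▸ hxM)
  have hxb : x ≠ Sum.inr b := fun h => hb (h ▸ hxM)
  apply hxy
  clear hxy
  -- key sym2 disequalities
  have key1 : ∀ (p : Fin m) (q : Fin n), p ≠ a →
      s((Sum.inl p : V), Sum.inr q) ≠ s(Sum.inl a, Sum.inr b) := by
    intro p q hp h
    rw [Sym2.eq_iff] at h
    rcases h with ⟨h1, h2⟩ | ⟨h1, h2⟩
    · exact hp (Sum.inl_injective h1)
    · exact absurd h1 (by simp)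
  have key2 : ∀ (p : Fin m) (q : Fin n), q ≠ b →
      s((Sum.inl p : V), Sum.inr q) ≠ s(Sum.inl a, Sum.inr b) := by
    intro p q hq h
    rw [Sym2.eq_iff] at h
    rcases h with ⟨h1, h2⟩ | ⟨h1, h2⟩
    · exact hq (Sum.inr_injective h2)
    · exact absurd h1 (by simp)
  have hG'adj : ∀ u v : V, G'.Adj u v ↔ G.Adj u v ∧ s(u, v) ≠ s(Sum.inl a, Sum.inr b) := by
    intro u v
    rw [hG', deleteEdges_adj]
    simp
  rcases x with p | p <;> rcases y with q | q
  · -- both left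
    have hpa : p ≠ a := fun h => hxa (by rw [h])
    by_cases hpq : p = q
    · subst hpq
      simp [SimpleGraph.dist_self]
    · obtain ⟨c, hc⟩ := exists_ne b
      have hne : (Sum.inl p : V) ≠ Sum.inl q := by simpa using hpq
      rw [dist_eq_two' G hne (by simp [hG]) (show G.Adj (Sum.inl p) (Sum.inr c) by simp [hG])
        (show G.Adj (Sum.inr c) (Sum.inl q) by simp [hG]),
        dist_eq_two' G' hne (fun h => by simpa [hG] using ((hG'adj _ _).mp h).1)
        ((hG'adj _ _).mpr ⟨by simp [hG], key2 p c hc⟩)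
        ((hG'adj _ _).mpr ⟨by simp [hG], fun h => key2 q c hc (Sym2.eq_swap.trans h)⟩)]
  · -- left, right : adjacent
    have hpa : p ≠ a := fun h => hxa (by rw [h])
    rw [(dist_eq_one_iff_adj (G := G)).mpr (by simp [hG]),
      (SimpleGraph.dist_eq_one_iff_adj (G := G')).mpr
        ((hG'adj _ _).mpr ⟨by simp [hG], key1 p q hpa⟩)]
  · -- right, left : adjacent
    have hpb : p ≠ b := fun h => hxb (by rw [h])
    rw [(dist_eq_one_iff_adj (G := G)).mpr (by simp [hG]),
      (SimpleGraph.dist_eq_one_iff_adj (G := G')).mpr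
        ((hG'adj _ _).mpr ⟨by simp [hG],
          fun h => key2 q p hpb (Sym2.eq_swap.trans h)⟩)]
  · -- both right
    have hpb : p ≠ b := fun h => hxb (by rw [h])
    by_cases hpq : p = q
    · subst hpq
      simp [SimpleGraph.dist_self]
    · obtain ⟨c, hc⟩ := exists_ne a
      have hne : (Sum.inr p : V) ≠ Sum.inr q := by simpa using hpq
      rw [dist_eq_two' G hne (by simp [hG]) (show G.Adj (Sum.inr p) (Sum.inl c) by simp [hG])
        (show G.Adj (Sum.inl c) (Sum.inr q) by simp [hG]),
        dist_eq_two' G' hne (fun h => by simpa [hG] using ((hG'adj _ _).mp h).1)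
        ((hG'adj _ _).mpr ⟨by simp [hG], fun h => key1 c p hc (Sym2.eq_swap.trans h)⟩)
        ((hG'adj _ _).mpr ⟨by simp [hG], key1 c q hc⟩)]
end

section
/- If for every vertex x of a connected graph G, EM(x) consists exactly of the edges incident to x, then a set M ⊆ V(G) is a distance-edge-monitoring set of G if and only if M is a vertex cover of G. -/
open SimpleGraph

/-- The set of edges of `G` monitored by the vertex `x`. -/
def EM {V : Type*} (G : SimpleGraph V) (x : V) : Set (Sym2 V) :=
  {e | e ∈ G.edgeSet ∧ ∃ v : V, G.dist x v ≠ (G.deleteEdges {e}).dist x v}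

theorem stmt_4 {V : Type*} (G : SimpleGraph V) (hG : G.Connected)
    (h : ∀ x : V, EM G x = G.incidenceSet x) :
    ∀ M : Set V, demSet G M ↔ isVC G M := by
  intro M
  constructor
  · intro hM e he
    obtain ⟨x, hx, y, hy⟩ := hM e he
    refine ⟨x, hx, ?_⟩
    have : e ∈ EM G x := ⟨he, y, hy⟩
    rw [h x] at this
    exact this.2
  · intro hM e he
    obtain ⟨x, hx, hxe⟩ := hM e he
    have : e ∈ EM G x := by rw [h x]; exact ⟨he, hxe⟩
    exact ⟨x, hx, this.2⟩
end

section
/- For two graphs G and H of orders m,n ≥ 2, dem(G ∨ H) = c(G ∨ H) = min{c(G)+n, c(H)+m}, where G ∨ H is the join of G and H. -/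
open SimpleGraph

/-- The join (complete product) of two graphs. -/
def joinG {V W : Type*} (G : SimpleGraph V) (H : SimpleGraph W) : SimpleGraph (V ⊕ W) where
  Adj x y :=
    match x, y with
    | Sum.inl a, Sum.inl b => G.Adj a b
    | Sum.inr a, Sum.inr b => H.Adj a b
    | Sum.inl _, Sum.inr _ => True
    | Sum.inr _, Sum.inl _ => True
  symm := ⟨by rintro (a|a) (b|b) h <;> first | exact h.symm | trivial⟩
  loopless := ⟨by rintro (a|a) h <;> exact SimpleGraph.irrefl _ h⟩

/-!
Two distinct non-adjacent vertices of a join lie on the same side, and every vertex of the other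
side is a common neighbour of them. With at least two vertices on each side, one of these common
neighbours is joined to the second vertex by an edge other than any given edge `e`, so deleting `e`
changes no distance from a vertex outside `e`. Hence only the endpoints of an edge detect it, and
the distance-edge-monitoring sets of the join are exactly its vertex covers. A vertex cover of the
join contains one side entirely (otherwise a cross edge is uncovered), and its trace on the other
side covers that graph.
-/

theorem Finset.preimage_inl_coe {α β : Type*} (u : Finset (α ⊕ β)) :
    Sum.inl ⁻¹' (u : Set (α ⊕ β)) = u.toLeft := by
  ext; simp

theorem Finset.preimage_inr_coe {α β : Type*} (u : Finset (α ⊕ β)) :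
    Sum.inr ⁻¹' (u : Set (α ⊕ β)) = u.toRight := by
  ext; simp

section General

variable {V : Type*} {G : SimpleGraph V}

theorem isVC_iff_forall_adj {C : Set V} : isVC G C ↔ ∀ a b, G.Adj a b → a ∈ C ∨ b ∈ C := by
  refine ⟨fun h a b hab => ?_, fun h e he => ?_⟩
  · obtain ⟨x, hxC, hx⟩ := h s(a, b) hab
    rcases Sym2.mem_iff.mp hx with rfl | rfl <;> tauto
  · induction e using Sym2.ind with
    | h a b =>
      rcases h a b he with ha | hb
      · exact ⟨a, ha, Sym2.mem_mk_left a b⟩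
      · exact ⟨b, hb, Sym2.mem_mk_right a b⟩

theorem isVC_univ : isVC G Set.univ :=
  isVC_iff_forall_adj.mpr fun a _ _ => .inl (Set.mem_univ a)

theorem isVC.demSet {C : Set V} (hC : isVC G C) : demSet G C := by
  intro e he
  obtain ⟨x, hxC, hxe⟩ := hC e he
  obtain ⟨y, rfl⟩ := Sym2.mem_iff_exists.mp hxe
  refine ⟨x, hxC, y, ?_⟩
  rw [dist_eq_one_iff_adj.mpr he, ne_comm, Ne, dist_eq_one_iff_adj, deleteEdges_adj]
  simp

theorem edist_deleteEdges_of_notMem {e : Sym2 V} {x : V} (hx : x ∉ e)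
    (hcommon : ∀ y, x ≠ y → ¬ G.Adj x y → ∃ w, G.Adj x w ∧ G.Adj w y ∧ s(w, y) ≠ e) (y : V) :
    (G.deleteEdges {e}).edist x y = G.edist x y := by
  have hadj_x : ∀ {w}, G.Adj x w → (G.deleteEdges {e}).Adj x w := fun {w} hxw =>
    (deleteEdges_adj ..).mpr ⟨hxw, fun h => hx (Set.mem_singleton_iff.mp h ▸ Sym2.mem_mk_left x w)⟩
  by_cases hxy : x = y
  · simp [hxy]
  by_cases hadj : G.Adj x y
  · rw [edist_eq_one_iff_adj.mpr hadj, edist_eq_one_iff_adj.mpr (hadj_x hadj)]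
  obtain ⟨w, hxw, hwy, hwe⟩ := hcommon y hxy hadj
  have hwy' : (G.deleteEdges {e}).Adj w y := (deleteEdges_adj ..).mpr ⟨hwy, hwe⟩
  rw [edist_eq_two_iff.mpr ⟨hxy, hadj, w, (mem_commonNeighbors ..).mpr ⟨hxw, hwy.symm⟩⟩,
    edist_eq_two_iff.mpr ⟨hxy, fun h => hadj (deleteEdges_le _ h), w,
      (mem_commonNeighbors ..).mpr ⟨hadj_x hxw, hwy'.symm⟩⟩]

theorem demSet_iff_isVC_of_exists_adj_adj
    (hcommon : ∀ e, ∀ x y, x ≠ y → ¬ G.Adj x y → ∃ w, G.Adj x w ∧ G.Adj w y ∧ s(w, y) ≠ e)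
    {M : Set V} : demSet G M ↔ isVC G M := by
  refine ⟨fun hM e he => ?_, isVC.demSet⟩
  obtain ⟨x, hxM, y, hxy⟩ := hM e he
  refine ⟨x, hxM, by_contra fun hx => hxy ?_⟩
  exact congrArg ENat.toNat (edist_deleteEdges_of_notMem hx (hcommon e x) y).symm

theorem dem_eq_vcNum_of_exists_adj_adj [Fintype V]
    (hcommon : ∀ e, ∀ x y, x ≠ y → ¬ G.Adj x y → ∃ w, G.Adj x w ∧ G.Adj w y ∧ s(w, y) ≠ e) :
    dem G = vcNum G := by
  simp only [dem, vcNum, demSet_iff_isVC_of_exists_adj_adj hcommon]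

theorem vcNum_le [Fintype V] {C : Finset V} (hC : isVC G C) : vcNum G ≤ C.card :=
  Nat.sInf_le ⟨C, rfl, hC⟩

theorem exists_isVC_card_eq_vcNum [Fintype V] (G : SimpleGraph V) :
    ∃ C : Finset V, C.card = vcNum G ∧ isVC G C := by
  have huniv : (Finset.univ : Finset V).card ∈ {k | ∃ C : Finset V, C.card = k ∧ isVC G C} :=
    ⟨_, rfl, by simpa using (isVC_univ (G := G))⟩
  exact Nat.sInf_mem ⟨_, huniv⟩

end General

section Join

variable {V W : Type*} {G : SimpleGraph V} {H : SimpleGraph W}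

theorem joinG_exists_adj_adj [Nontrivial V] [Nontrivial W] (e : Sym2 (V ⊕ W)) (x y : V ⊕ W)
    (hxy : ¬ (joinG G H).Adj x y) :
    ∃ w, (joinG G H).Adj x w ∧ (joinG G H).Adj w y ∧ s(w, y) ≠ e := by
  rcases x with a | a <;> rcases y with b | b
  · obtain ⟨w, hw⟩ := Function.Injective.exists_ne
      (f := fun w : W => s(Sum.inr w, Sum.inl b))
      (fun _ _ h => Sum.inr_injective (Sym2.congr_left.mp h)) e
    exact ⟨Sum.inr w, trivial, trivial, hw⟩
  · exact absurd trivial hxy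
  · exact absurd trivial hxy
  · obtain ⟨w, hw⟩ := Function.Injective.exists_ne
      (f := fun w : V => s(Sum.inl w, Sum.inr b))
      (fun _ _ h => Sum.inl_injective (Sym2.congr_left.mp h)) e
    exact ⟨Sum.inl w, trivial, trivial, hw⟩

theorem isVC_joinG_iff {C : Set (V ⊕ W)} :
    isVC (joinG G H) C ↔ isVC G (Sum.inl ⁻¹' C) ∧ isVC H (Sum.inr ⁻¹' C) ∧
      (Set.range Sum.inl ⊆ C ∨ Set.range Sum.inr ⊆ C) := by
  simp only [isVC_iff_forall_adj, Set.mem_preimage, Set.range_subset_iff]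
  constructor
  · intro h
    refine ⟨fun a b => h (.inl a) (.inl b), fun a b => h (.inr a) (.inr b), ?_⟩
    by_contra! hnot
    obtain ⟨⟨v, hv⟩, ⟨w, hw⟩⟩ := hnot
    rcases h (.inl v) (.inr w) trivial with h | h <;> contradiction
  · rintro ⟨hG, hH, hside⟩ (a | a) (b | b) hab
    · exact hG a b hab
    · exact hside.imp (· a) (· b)
    · exact hside.symm.imp (· a) (· b)
    · exact hH a b hab

theorem vcNum_joinG_le_left [Fintype V] [Fintype W] :
    vcNum (joinG G H) ≤ vcNum G + Fintype.card W := by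
  obtain ⟨C, hcard, hC⟩ := exists_isVC_card_eq_vcNum G
  rw [← hcard, ← Finset.card_univ, ← Finset.card_disjSum]
  refine vcNum_le (isVC_joinG_iff.mpr ⟨?_, ?_, .inr ?_⟩)
  · simpa [Finset.preimage_inl_coe] using hC
  · simpa [Finset.preimage_inr_coe] using isVC_univ
  · simp [Set.range_subset_iff]

theorem vcNum_joinG_le_right [Fintype V] [Fintype W] :
    vcNum (joinG G H) ≤ vcNum H + Fintype.card V := by
  obtain ⟨C, hcard, hC⟩ := exists_isVC_card_eq_vcNum H
  rw [← hcard, ← Finset.card_univ, add_comm, ← Finset.card_disjSum]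
  refine vcNum_le (isVC_joinG_iff.mpr ⟨?_, ?_, .inl ?_⟩)
  · simpa [Finset.preimage_inl_coe] using isVC_univ
  · simpa [Finset.preimage_inr_coe] using hC
  · simp [Set.range_subset_iff]

theorem min_le_vcNum_joinG [Fintype V] [Fintype W] :
    min (vcNum G + Fintype.card W) (vcNum H + Fintype.card V) ≤ vcNum (joinG G H) := by
  obtain ⟨C, hcard, hC⟩ := exists_isVC_card_eq_vcNum (joinG G H)
  rw [isVC_joinG_iff, Finset.preimage_inl_coe, Finset.preimage_inr_coe] at hC
  rw [← hcard, ← Finset.card_toLeft_add_card_toRight]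
  obtain ⟨hG, hH, hV | hW⟩ := hC
  · have hleft : C.toLeft = Finset.univ :=
      Finset.eq_univ_iff_forall.mpr fun v => Finset.mem_toLeft.mpr (hV ⟨v, rfl⟩)
    rw [hleft, Finset.card_univ, add_comm _ C.toRight.card]
    exact min_le_of_right_le (Nat.add_le_add_right (vcNum_le hH) _)
  · have hright : C.toRight = Finset.univ :=
      Finset.eq_univ_iff_forall.mpr fun w => Finset.mem_toRight.mpr (hW ⟨w, rfl⟩)
    rw [hright, Finset.card_univ]
    exact min_le_of_left_le (Nat.add_le_add_right (vcNum_le hG) _)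

theorem vcNum_joinG [Fintype V] [Fintype W] :
    vcNum (joinG G H) = min (vcNum G + Fintype.card W) (vcNum H + Fintype.card V) :=
  le_antisymm (le_min vcNum_joinG_le_left vcNum_joinG_le_right) min_le_vcNum_joinG

end Join

theorem stmt_5 {V W : Type*} [Fintype V] [Fintype W]
    (G : SimpleGraph V) (H : SimpleGraph W)
    (hm : 2 ≤ Fintype.card V) (hn : 2 ≤ Fintype.card W) :
    dem (joinG G H) = vcNum (joinG G H) ∧
    dem (joinG G H) = min (vcNum G + Fintype.card W) (vcNum H + Fintype.card V) := by
  have : Nontrivial V := Fintype.one_lt_card_iff_nontrivial.mp hm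
  have : Nontrivial W := Fintype.one_lt_card_iff_nontrivial.mp hn
  have hdem : dem (joinG G H) = vcNum (joinG G H) :=
    dem_eq_vcNum_of_exists_adj_adj fun e x y _ => joinG_exists_adj_adj e x y
  exact ⟨hdem, hdem.trans vcNum_joinG⟩
end

section
/- For two connected graphs G and H of orders m,n ≥ 2 (H rooted), dem(G) ≤ dem(G ⊙ H) ≤ m·dem(H); moreover dem(G ⊙ H) = dem(G) if and only if H is a tree. -/
open SimpleGraph

/-- The cluster (rooted product) `G ⊙ H` with root `r : W`: one copy of `G` and a
copy of `H` for each vertex of `G`, identifying the root of each copy with the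
corresponding vertex of `G`. -/
def cluster {V W : Type*} (G : SimpleGraph V) (H : SimpleGraph W) (r : W) :
    SimpleGraph (V × W) where
  Adj x y := (x.1 = y.1 ∧ H.Adj x.2 y.2) ∨ (x.2 = r ∧ y.2 = r ∧ G.Adj x.1 y.1)
  symm := by
    constructor
    rintro ⟨a,w⟩ ⟨b,z⟩ (⟨h1,h2⟩|⟨h1,h2,h3⟩)
    · exact Or.inl ⟨h1.symm, h2.symm⟩
    · exact Or.inr ⟨h2, h1, h3.symm⟩
  loopless := by
    constructor
    rintro ⟨a,w⟩ (⟨_,h⟩|⟨_,_,h⟩) <;> exact SimpleGraph.irrefl _ h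


/-!
Distances in a cluster are explicit: inside one copy they are those of `H`, and between copies
`u ≠ v` they are `d_H(a, r) + d_G(u, v) + d_H(r, b)`. Deleting a base edge of the cluster only
deletes it in `G`, and deleting an edge of copy `c` only deletes it in that copy. Hence `(x, w)`
monitors a base edge iff `x` monitors it in `G`, and monitors an edge of copy `c` iff `w` (when
`x = c`) or the root `r` (when `x ≠ c`) monitors it in `H`. So `M ↦ M.image Prod.fst` and
`M ↦ V × M` give the two bounds, and when `H` is a tree `M × {r}` monitors the cluster for every
monitoring set `M` of `G`, since the root monitors every bridge. If `H` has a cycle, some edge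
lies outside a shortest-path tree rooted at `r`, so `r` does not monitor it; a monitoring set of
size `dem G ≤ |V| - 1` misses some copy, and the copy of that edge there is then not monitored.
-/

namespace SimpleGraph

variable {V : Type*} {G G' : SimpleGraph V} {u v : V}

lemma Hom.edist_le {U : Type*} {K : SimpleGraph U} (f : G →g K) (u v : V) :
    K.edist (f u) (f v) ≤ G.edist u v := by
  by_cases hr : G.Reachable u v
  · obtain ⟨p, hp⟩ := hr.exists_walk_length_eq_edist
    rw [← hp, ← Walk.length_map f]
    exact SimpleGraph.edist_le _
  · rw [edist_eq_top_of_not_reachable hr]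
    exact le_top

lemma Adj.edist_le_edist_add_one (h : G.Adj u v) (w : V) :
    G.edist u w ≤ G.edist v w + 1 :=
  calc G.edist u w ≤ G.edist u v + G.edist v w := G.edist_triangle
    _ = G.edist v w + 1 := by rw [edist_eq_one_iff_adj.2 h, add_comm]

lemma le_add_edist_of_forall_adj {F : V → ℕ∞} (hF : ∀ x y, G.Adj x y → F x ≤ F y + 1)
    (u v : V) : F u ≤ F v + G.edist u v := by
  by_cases hr : G.Reachable u v
  · obtain ⟨p, hp⟩ := hr.exists_walk_length_eq_edist
    rw [← hp]
    clear hp hr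
    induction p with
    | nil => simp
    | cons h p ih =>
      rw [Walk.length_cons, Nat.cast_add, Nat.cast_one]
      calc _ ≤ _ + 1 := hF _ _ h
        _ ≤ F _ + p.length + 1 := by gcongr
        _ = _ := by ring
  · simp [edist_eq_top_of_not_reachable hr]

lemma dist_ne_dist_iff_edist_ne_edist (hr : G.Reachable u v) :
    G.dist u v ≠ G'.dist u v ↔ G.edist u v ≠ G'.edist u v := by
  by_cases hr' : G'.Reachable u v
  · rw [← hr.coe_dist_eq_edist, ← hr'.coe_dist_eq_edist, Ne, Ne, Nat.cast_inj]
  · rw [edist_eq_top_of_not_reachable hr', dist_eq_zero_of_not_reachable hr']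
    have huv : u ≠ v := by rintro rfl; exact hr' .rfl
    exact iff_of_true (hr.pos_dist_of_ne huv).ne' (edist_ne_top_iff_reachable.2 hr)

lemma Reachable.exists_adj_dist_add_one (hr : G.Reachable u v) (hv : v ≠ u) :
    ∃ p, G.Adj p v ∧ G.dist u p + 1 = G.dist u v := by
  obtain ⟨q, hq⟩ := hr.symm.exists_walk_length_eq_dist
  obtain ⟨p, hadj, q', rfl⟩ := Walk.exists_eq_cons_of_ne hv q
  rw [Walk.length_cons, dist_comm] at hq
  have hshort : G.dist u p ≤ q'.length := dist_comm (G := G) ▸ G.dist_le q'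
  have hlong : G.dist u v ≤ G.dist u p + G.dist p v := hadj.symm.reachable.dist_triangle_right u
  rw [dist_eq_one_iff_adj.2 hadj.symm] at hlong
  exact ⟨p, hadj.symm, by omega⟩

lemma edist_eq_of_forall_exists_adj_dist_add_one (hle : G' ≤ G)
    (hpar : ∀ v ≠ u, G.Reachable u v → ∃ p, G'.Adj p v ∧ G.dist u p + 1 = G.dist u v)
    (hr : G.Reachable u v) : G'.edist u v = G.edist u v := by
  refine le_antisymm ?_ (edist_anti hle)
  rw [← hr.coe_dist_eq_edist]
  induction hn : G.dist u v using Nat.strong_induction_on generalizing v with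
  | _ n ih =>
    by_cases hvu : v = u
    · simp [hvu]
    obtain ⟨p, hp, hdist⟩ := hpar v hvu hr
    calc G'.edist u v ≤ G'.edist u p + 1 := by
          rw [edist_comm, G'.edist_comm (u := u)]
          exact hp.symm.edist_le_edist_add_one u
      _ ≤ (G.dist u p : ℕ∞) + 1 := by
          gcongr
          exact ih _ (by omega) (hr.trans (hle hp).symm.reachable) rfl
      _ = n := by rw [← hn, ← hdist]; push_cast; rfl

def MonitorsEdge (G : SimpleGraph V) (x : V) (e : Sym2 V) : Prop :=
  ∃ y, G.edist x y ≠ (G.deleteEdges {e}).edist x y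

lemma demSet_iff_forall_exists_monitorsEdge (hG : G.Connected) {M : Set V} :
    demSet G M ↔ ∀ e ∈ G.edgeSet, ∃ x ∈ M, G.MonitorsEdge x e := by
  simp only [demSet, MonitorsEdge, dist_ne_dist_iff_edist_ne_edist (hG _ _)]

lemma monitorsEdge_of_mem {e : Sym2 V} (he : e ∈ G.edgeSet) (hx : u ∈ e) :
    G.MonitorsEdge u e := by
  rw [← Sym2.other_spec hx] at he ⊢
  refine ⟨Sym2.Mem.other hx, ?_⟩
  rw [edist_eq_one_iff_adj.2 he, ne_comm, Ne, edist_eq_one_iff_adj, deleteEdges_adj]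
  simp

lemma monitorsEdge_of_isBridge (hG : G.Connected) {e : Sym2 V} (hb : G.IsBridge e) (u : V) :
    G.MonitorsEdge u e := by
  induction e using Sym2.ind with
  | _ a b =>
    rw [isBridge_iff] at hb
    have hsplit : ¬(G.deleteEdges {s(a, b)}).Reachable u a ∨
        ¬(G.deleteEdges {s(a, b)}).Reachable u b := by
      by_contra! h
      exact hb (h.1.symm.trans h.2)
    obtain ⟨y, hy⟩ : ∃ y, ¬(G.deleteEdges {s(a, b)}).Reachable u y := by
      rcases hsplit with h | h
      exacts [⟨a, h⟩, ⟨b, h⟩]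
    refine ⟨y, ?_⟩
    rw [edist_eq_top_of_not_reachable hy]
    exact edist_ne_top_iff_reachable.2 (hG u y)

lemma exists_not_monitorsEdge_of_not_isTree [Finite V] (hG : G.Connected) (hT : ¬G.IsTree)
    (u : V) : ∃ e ∈ G.edgeSet, ¬G.MonitorsEdge u e := by
  have := Fintype.ofFinite V
  classical
  choose! par hpar using fun v (hv : v ≠ u) => (hG u v).exists_adj_dist_add_one hv
  set parentEdges := (Finset.univ.erase u).image fun v => s(par v, v)
  have hcard : parentEdges.card < G.edgeFinset.card := by
    have hlow := hG.card_vert_le_card_edgeSet_add_one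
    have hne : Nat.card G.edgeSet + 1 ≠ Nat.card V := fun h =>
      hT (isTree_iff_connected_and_card.2 ⟨hG, h⟩)
    rw [Nat.card_eq_fintype_card, Nat.card_eq_fintype_card, ← edgeFinset_card] at hlow hne
    calc parentEdges.card ≤ (Finset.univ.erase u).card := Finset.card_image_le
      _ < G.edgeFinset.card := by
        rw [Finset.card_erase_of_mem (Finset.mem_univ u), Finset.card_univ]
        have : 0 < Fintype.card V := Fintype.card_pos_iff.2 hG.nonempty
        omega
  obtain ⟨e, he, hnot⟩ := Finset.exists_mem_notMem_of_card_lt_card hcard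
  refine ⟨e, mem_edgeFinset.1 he, fun ⟨y, hy⟩ => hy ?_⟩
  refine (edist_eq_of_forall_exists_adj_dist_add_one (deleteEdges_le _) ?_ (hG u y)).symm
  intro v hv _
  refine ⟨par v, deleteEdges_adj.2 ⟨(hpar v hv).1, ?_⟩, (hpar v hv).2⟩
  rintro rfl
  exact hnot (Finset.mem_image.2 ⟨v, Finset.mem_erase.2 ⟨hv, Finset.mem_univ v⟩, rfl⟩)

end SimpleGraph

section Cluster

variable {V W : Type*} (G : SimpleGraph V) (K : V → SimpleGraph W) (r : W)

-- Deleting an edge of one copy of `H` leaves a cluster whose copies differ.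
def clusterFamily : SimpleGraph (V × W) where
  Adj x y := (x.1 = y.1 ∧ (K x.1).Adj x.2 y.2) ∨ (x.2 = r ∧ y.2 = r ∧ G.Adj x.1 y.1)
  symm := by
    constructor
    rintro ⟨a, w⟩ ⟨b, z⟩ (⟨rfl, h⟩ | ⟨h₁, h₂, h⟩)
    exacts [Or.inl ⟨rfl, h.symm⟩, Or.inr ⟨h₂, h₁, h.symm⟩]
  loopless := by
    constructor
    rintro ⟨a, w⟩ (⟨_, h⟩ | ⟨_, _, h⟩) <;> exact SimpleGraph.irrefl _ h

lemma cluster_eq_clusterFamily (H : SimpleGraph W) :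
    cluster G H r = clusterFamily G (fun _ => H) r := rfl

def clusterFamily.copyHom (c : V) : K c →g clusterFamily G K r where
  toFun w := (c, w)
  map_rel' h := Or.inl ⟨rfl, h⟩

def clusterFamily.baseHom : G →g clusterFamily G K r where
  toFun v := (v, r)
  map_rel' h := Or.inr ⟨rfl, rfl, h⟩

open Classical in
noncomputable def clusterEDist (x y : V × W) : ℕ∞ :=
  if x.1 = y.1 then (K x.1).edist x.2 y.2
  else (K x.1).edist x.2 r + G.edist x.1 y.1 + (K y.1).edist r y.2

variable {G K r}

lemma clusterEDist_le_of_adj {x x' : V × W} (h : (clusterFamily G K r).Adj x x') (y : V × W) :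
    clusterEDist G K r x y ≤ clusterEDist G K r x' y + 1 := by
  obtain ⟨v, b⟩ := y
  rcases h with ⟨hc, hadj⟩ | ⟨hx, hx', hadj⟩
  · obtain ⟨c, a⟩ := x
    obtain ⟨c', a'⟩ := x'
    dsimp only at hc hadj
    subst hc
    unfold clusterEDist
    split_ifs
    · exact hadj.edist_le_edist_add_one b
    · rw [add_right_comm _ _ (1 : ℕ∞), add_right_comm _ _ (1 : ℕ∞)]
      gcongr
      exact hadj.edist_le_edist_add_one r
  · obtain ⟨u, w⟩ := x
    obtain ⟨u', w'⟩ := x'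
    dsimp only at hx hx' hadj
    subst w w'
    by_cases hu : u = v <;> by_cases hu' : u' = v
    · exact (hadj.ne (hu.trans hu'.symm)).elim
    · subst hu
      simp only [clusterEDist, if_pos, if_neg hu']
      exact le_add_self.trans le_self_add
    · subst hu'
      simp only [clusterEDist, if_pos, if_neg hu, SimpleGraph.edist_self, zero_add,
        edist_eq_one_iff_adj.2 hadj, add_comm, le_refl]
    · simp only [clusterEDist, if_neg hu, if_neg hu', SimpleGraph.edist_self, zero_add]
      rw [add_right_comm _ _ (1 : ℕ∞)]
      gcongr
      exact hadj.edist_le_edist_add_one v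

theorem edist_clusterFamily (x y : V × W) :
    (clusterFamily G K r).edist x y = clusterEDist G K r x y := by
  refine le_antisymm ?_ ?_
  · obtain ⟨u, a⟩ := x
    obtain ⟨v, b⟩ := y
    unfold clusterEDist
    split_ifs with huv
    · dsimp only at huv
      subst huv
      exact (clusterFamily.copyHom G K r u).edist_le a b
    · calc _ ≤ (clusterFamily G K r).edist (u, a) (u, r) +
            (clusterFamily G K r).edist (u, r) (v, r) +
              (clusterFamily G K r).edist (v, r) (v, b) :=
            SimpleGraph.edist_triangle.trans (by gcongr; exact SimpleGraph.edist_triangle)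
        _ ≤ _ := by
          gcongr
          exacts [(clusterFamily.copyHom G K r u).edist_le a r,
            (clusterFamily.baseHom G K r).edist_le u v,
            (clusterFamily.copyHom G K r v).edist_le r b]
  · have hy : clusterEDist G K r y y = 0 := by simp [clusterEDist]
    simpa [hy] using le_add_edist_of_forall_adj
      (fun z z' h => clusterEDist_le_of_adj (G := G) (K := K) (r := r) h y) x y

end Cluster

section ClusterEdges

variable {V W : Type*} {G : SimpleGraph V} {K : V → SimpleGraph W} {r : W}

@[simp] lemma clusterFamily_adj {x y : V × W} : (clusterFamily G K r).Adj x y ↔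
    (x.1 = y.1 ∧ (K x.1).Adj x.2 y.2) ∨ (x.2 = r ∧ y.2 = r ∧ G.Adj x.1 y.1) := Iff.rfl

lemma clusterFamily_deleteEdges_base (u v : V) :
    (clusterFamily G K r).deleteEdges {s((u, r), (v, r))} =
      clusterFamily (G.deleteEdges {s(u, v)}) K r := by
  ext ⟨x, a⟩ ⟨y, b⟩
  simp only [deleteEdges_adj, clusterFamily_adj, Set.mem_singleton_iff, Sym2.eq_iff,
    Prod.mk.injEq]
  grind [SimpleGraph.Adj.ne]

lemma clusterFamily_deleteEdges_copy [DecidableEq V] (c : V) (a b : W) :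
    (clusterFamily G K r).deleteEdges {s((c, a), (c, b))} =
      clusterFamily G (Function.update K c ((K c).deleteEdges {s(a, b)})) r := by
  ext ⟨x, a'⟩ ⟨y, b'⟩
  by_cases hx : x = c
  · subst hx
    simp only [deleteEdges_adj, clusterFamily_adj, Set.mem_singleton_iff, Sym2.eq_iff,
      Prod.mk.injEq, Function.update_self]
    grind [SimpleGraph.Adj.ne]
  · simp only [deleteEdges_adj, clusterFamily_adj, Set.mem_singleton_iff, Sym2.eq_iff,
      Prod.mk.injEq, Function.update_of_ne hx]
    grind

lemma mem_edgeSet_clusterFamily {e : Sym2 (V × W)} : e ∈ (clusterFamily G K r).edgeSet ↔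
    (∃ c a b, (K c).Adj a b ∧ e = s((c, a), (c, b))) ∨
    (∃ u v, G.Adj u v ∧ e = s((u, r), (v, r))) := by
  induction e using Sym2.ind with
  | _ x y =>
    obtain ⟨x, a⟩ := x
    obtain ⟨y, b⟩ := y
    simp only [mem_edgeSet, clusterFamily_adj, Sym2.eq_iff, Prod.mk.injEq]
    grind [SimpleGraph.Adj.symm]

end ClusterEdges

section ClusterMonitors

variable {V W : Type*} {G : SimpleGraph V} {H : SimpleGraph W} {r : W}

lemma monitorsEdge_cluster_base_iff (hH : H.Connected) (x : V) (w : W) (u v : V) :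
    (cluster G H r).MonitorsEdge (x, w) s((u, r), (v, r)) ↔ G.MonitorsEdge x s(u, v) := by
  simp only [MonitorsEdge, cluster_eq_clusterFamily, clusterFamily_deleteEdges_base,
    edist_clusterFamily, clusterEDist, Prod.exists]
  constructor
  · rintro ⟨y, z, hne⟩
    refine ⟨y, fun h => hne ?_⟩
    split_ifs <;> simp only [h]
  · rintro ⟨y, hne⟩
    have hxy : x ≠ y := by rintro rfl; simp at hne
    refine ⟨y, r, ?_⟩
    rw [if_neg hxy, if_neg hxy]
    exact (ENat.add_left_injective_of_ne_top (edist_ne_top_iff_reachable.2 (hH r r))).ne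
      ((ENat.add_right_injective_of_ne_top (edist_ne_top_iff_reachable.2 (hH w r))).ne hne)

lemma monitorsEdge_cluster_copy_iff [DecidableEq V] (hG : G.Connected) (hH : H.Connected)
    (x : V) (w : W) (c : V) (a b : W) :
    (cluster G H r).MonitorsEdge (x, w) s((c, a), (c, b)) ↔
      H.MonitorsEdge (if x = c then w else r) s(a, b) := by
  simp only [MonitorsEdge, cluster_eq_clusterFamily, clusterFamily_deleteEdges_copy,
    edist_clusterFamily, clusterEDist, Prod.exists]
  by_cases hxc : x = c
  · subst hxc
    simp only [if_true, Function.update_self]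
    constructor
    · rintro ⟨y, z, hne⟩
      by_cases hxy : x = y
      · rw [if_pos hxy, if_pos hxy] at hne
        exact ⟨z, hne⟩
      · rw [if_neg hxy, if_neg hxy, Function.update_of_ne (Ne.symm hxy)] at hne
        exact ⟨r, fun h => hne (by rw [h])⟩
    · rintro ⟨z, hne⟩
      exact ⟨x, z, by simpa using hne⟩
  · simp only [if_neg hxc, Function.update_of_ne hxc]
    constructor
    · rintro ⟨y, z, hne⟩
      by_cases hxy : x = y
      · simp [hxy] at hne
      rw [if_neg hxy, if_neg hxy] at hne
      by_cases hyc : y = c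
      · subst hyc
        rw [Function.update_self] at hne
        exact ⟨z, fun h => hne (by rw [h])⟩
      · simp [Function.update_of_ne hyc] at hne
    · rintro ⟨z, hne⟩
      refine ⟨c, z, ?_⟩
      rw [if_neg hxc, if_neg hxc, Function.update_self]
      exact (ENat.add_right_injective_of_ne_top
        (WithTop.add_ne_top.2 ⟨edist_ne_top_iff_reachable.2 (hH w r),
          edist_ne_top_iff_reachable.2 (hG x c)⟩)).ne hne

lemma cluster_connected (hG : G.Connected) (hH : H.Connected) : (cluster G H r).Connected := by
  have : Nonempty (V × W) := ⟨(hG.nonempty.some, r)⟩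
  refine Connected.mk fun x y => edist_ne_top_iff_reachable.1 ?_
  have hfin : ∀ {u v}, H.edist u v ≠ ⊤ := edist_ne_top_iff_reachable.2 (hH _ _)
  rw [cluster_eq_clusterFamily, edist_clusterFamily, clusterEDist]
  split_ifs
  · exact hfin
  · exact WithTop.add_ne_top.2
      ⟨WithTop.add_ne_top.2 ⟨hfin, edist_ne_top_iff_reachable.2 (hG _ _)⟩, hfin⟩

end ClusterMonitors

section Dem

variable {V : Type*} {G : SimpleGraph V}

lemma dem_le_card [Fintype V] {M : Finset V} (h : demSet G M) : dem G ≤ M.card :=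
  Nat.sInf_le ⟨M, rfl, h⟩

lemma demSet_univ_erase [Fintype V] [DecidableEq V] (hG : G.Connected) (u : V) :
    demSet G ↑(Finset.univ.erase u) := by
  rw [demSet_iff_forall_exists_monitorsEdge hG]
  intro e he
  induction e using Sym2.ind with
  | _ a b =>
    by_cases ha : a = u
    · exact ⟨b, by simp [← ha, (G.ne_of_adj he).symm],
        monitorsEdge_of_mem he (Sym2.mem_mk_right a b)⟩
    · exact ⟨a, by simp [ha], monitorsEdge_of_mem he (Sym2.mem_mk_left a b)⟩

lemma exists_demSet_card_eq_dem [Fintype V] (hG : G.Connected) :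
    ∃ M : Finset V, M.card = dem G ∧ demSet G ↑M := by
  classical
  have hne : {k | ∃ M : Finset V, M.card = k ∧ demSet G ↑M}.Nonempty :=
    ⟨_, _, rfl, demSet_univ_erase hG hG.nonempty.some⟩
  exact Nat.sInf_mem hne

lemma dem_le_card_sub_one [Fintype V] (hG : G.Connected) : dem G ≤ Fintype.card V - 1 := by
  classical
  simpa using dem_le_card (demSet_univ_erase hG hG.nonempty.some)

lemma demSet.nonempty [Nontrivial V] (hG : G.Connected) {M : Finset V} (h : demSet G ↑M) :
    M.Nonempty := by
  obtain ⟨v, hv⟩ := hG.preconnected.exists_adj_of_nontrivial hG.nonempty.some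
  obtain ⟨x, hx, -⟩ := h s(_, v) hv
  exact ⟨x, hx⟩

end Dem

section Main

variable {V W : Type*} [Fintype V] [Fintype W] {G : SimpleGraph V} {H : SimpleGraph W} {r : W}

theorem dem_le_dem_cluster (hG : G.Connected) (hH : H.Connected) :
    dem G ≤ dem (cluster G H r) := by
  classical
  have hC := cluster_connected (r := r) hG hH
  obtain ⟨M, hM, hMset⟩ := exists_demSet_card_eq_dem hC
  rw [demSet_iff_forall_exists_monitorsEdge hC] at hMset
  have hproj : demSet G ↑(M.image Prod.fst) := by
    rw [demSet_iff_forall_exists_monitorsEdge hG]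
    intro e he
    induction e using Sym2.ind with
    | _ u v =>
      obtain ⟨⟨x, w⟩, hx, hmon⟩ := hMset s((u, r), (v, r)) (Or.inr ⟨rfl, rfl, he⟩)
      exact ⟨x, Finset.mem_image_of_mem Prod.fst hx,
        (monitorsEdge_cluster_base_iff hH x w u v).1 hmon⟩
  calc dem G ≤ (M.image Prod.fst).card := dem_le_card hproj
    _ ≤ M.card := Finset.card_image_le
    _ = dem (cluster G H r) := hM

theorem dem_cluster_le_card_mul_dem [Nontrivial W] (hG : G.Connected) (hH : H.Connected) :
    dem (cluster G H r) ≤ Fintype.card V * dem H := by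
  classical
  obtain ⟨M, hM, hMset⟩ := exists_demSet_card_eq_dem hH
  obtain ⟨w₀, hw₀⟩ := hMset.nonempty hH
  rw [demSet_iff_forall_exists_monitorsEdge hH] at hMset
  have hcopies : demSet (cluster G H r) ↑((Finset.univ : Finset V) ×ˢ M) := by
    rw [demSet_iff_forall_exists_monitorsEdge (cluster_connected hG hH)]
    intro e he
    rw [cluster_eq_clusterFamily, mem_edgeSet_clusterFamily] at he
    rcases he with ⟨c, a, b, hab, rfl⟩ | ⟨u, v, huv, rfl⟩
    · obtain ⟨w, hw, hmon⟩ := hMset s(a, b) hab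
      refine ⟨(c, w), Finset.mem_product.2 ⟨Finset.mem_univ c, hw⟩, ?_⟩
      rwa [monitorsEdge_cluster_copy_iff hG hH, if_pos rfl]
    · exact ⟨(u, w₀), Finset.mem_product.2 ⟨Finset.mem_univ u, hw₀⟩,
        (monitorsEdge_cluster_base_iff hH u w₀ u v).2
          (monitorsEdge_of_mem huv (Sym2.mem_mk_left u v))⟩
  calc dem (cluster G H r) ≤ (Finset.univ ×ˢ M).card := dem_le_card hcopies
    _ = Fintype.card V * dem H := by rw [Finset.card_product, Finset.card_univ, hM]

theorem dem_cluster_le_dem_of_isTree [Nontrivial V] (hG : G.Connected) (hT : H.IsTree) :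
    dem (cluster G H r) ≤ dem G := by
  classical
  obtain ⟨M, hM, hMset⟩ := exists_demSet_card_eq_dem hG
  obtain ⟨x₀, hx₀⟩ := hMset.nonempty hG
  rw [demSet_iff_forall_exists_monitorsEdge hG] at hMset
  have hroots : demSet (cluster G H r) ↑(M ×ˢ {r}) := by
    rw [demSet_iff_forall_exists_monitorsEdge (cluster_connected hG hT.connected)]
    intro e he
    rw [cluster_eq_clusterFamily, mem_edgeSet_clusterFamily] at he
    rcases he with ⟨c, a, b, hab, rfl⟩ | ⟨u, v, huv, rfl⟩
    · refine ⟨(x₀, r), Finset.mem_product.2 ⟨hx₀, Finset.mem_singleton_self r⟩, ?_⟩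
      rw [monitorsEdge_cluster_copy_iff hG hT.connected, ite_self]
      exact monitorsEdge_of_isBridge hT.connected
        (isAcyclic_iff_forall_isBridge.1 hT.isAcyclic hab) r
    · obtain ⟨x, hx, hmon⟩ := hMset s(u, v) huv
      exact ⟨(x, r), Finset.mem_product.2 ⟨hx, Finset.mem_singleton_self r⟩,
        (monitorsEdge_cluster_base_iff hT.connected x r u v).2 hmon⟩
  calc dem (cluster G H r) ≤ (M ×ˢ {r}).card := dem_le_card hroots
    _ = dem G := by rw [Finset.card_product, Finset.card_singleton, mul_one, hM]

theorem isTree_of_dem_cluster_eq (hG : G.Connected) (hH : H.Connected)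
    (heq : dem (cluster G H r) = dem G) : H.IsTree := by
  classical
  by_contra hT
  obtain ⟨e, he, hnot⟩ := exists_not_monitorsEdge_of_not_isTree hH hT r
  have hC := cluster_connected (r := r) hG hH
  obtain ⟨M, hM, hMset⟩ := exists_demSet_card_eq_dem hC
  obtain ⟨v₀, -, hv₀⟩ : ∃ v₀ ∈ Finset.univ, v₀ ∉ M.image Prod.fst := by
    refine Finset.exists_mem_notMem_of_card_lt_card ?_
    have := Fintype.card_pos_iff.2 hG.nonempty
    calc (M.image Prod.fst).card ≤ M.card := Finset.card_image_le
      _ = dem G := hM.trans heq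
      _ ≤ Fintype.card V - 1 := dem_le_card_sub_one hG
      _ < Finset.univ.card := by rw [Finset.card_univ]; omega
  induction e using Sym2.ind with
  | _ a b =>
    obtain ⟨⟨x, w⟩, hx, hmon⟩ := (demSet_iff_forall_exists_monitorsEdge hC).1 hMset
      s((v₀, a), (v₀, b)) (Or.inl ⟨rfl, he⟩)
    have hxv : x ≠ v₀ := by
      rintro rfl
      exact hv₀ (Finset.mem_image_of_mem Prod.fst hx)
    rw [monitorsEdge_cluster_copy_iff hG hH, if_neg hxv] at hmon
    exact hnot hmon

end Main

theorem stmt_7 {V W : Type*} [Fintype V] [Fintype W]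
    (G : SimpleGraph V) (H : SimpleGraph W) (r : W)
    (hG : G.Connected) (hH : H.Connected)
    (hm : 2 ≤ Fintype.card V) (hn : 2 ≤ Fintype.card W) :
    dem G ≤ dem (cluster G H r) ∧
    dem (cluster G H r) ≤ Fintype.card V * dem H ∧
    (dem (cluster G H r) = dem G ↔ H.IsTree) := by
  have : Nontrivial V := Fintype.one_lt_card_iff_nontrivial.1 hm
  have : Nontrivial W := Fintype.one_lt_card_iff_nontrivial.1 hn
  exact ⟨dem_le_dem_cluster hG hH, dem_cluster_le_card_mul_dem hG hH,
    isTree_of_dem_cluster_eq hG hH,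
    fun hT => (dem_cluster_le_dem_of_isTree hG hT).antisymm (dem_le_dem_cluster hG hH)⟩
end

section
/- Let G be a connected graph with at least one edge. Then dem(G) = 1 if and only if G is a tree. -/
open SimpleGraph

/-!
In a tree every edge is a bridge, so deleting it disconnects one of its ends from any fixed
vertex `x`, and that distance drops to the junk value `0`. Conversely, if `G` has a cycle, take
the cycle edge `uv` maximising `d(x, u) + d(x, v)`. A shortest walk from `x` to `v` that uses
`uv` can be rerouted through the other cycle neighbour `w` of `v`, since `d(x, w) ≤ d(x, u)`;
likewise for `u`. Hence both ends of `uv`, and then every vertex, keep their distance from `x`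
in `G - uv`, so `x` does not monitor `uv`.
-/

namespace SimpleGraph

variable {V : Type*} {G : SimpleGraph V}

namespace Walk

lemma dist_lt_length_of_mem_support {x y a : V} (p : G.Walk x y) (ha : a ∈ p.support)
    (hay : a ≠ y) : G.dist x a < p.length := by
  classical
  have hsplit := congrArg Walk.length (p.take_spec ha)
  rw [length_append] at hsplit
  have hdrop : (p.dropUntil a ha).length ≠ 0 := fun h => hay (eq_of_length_eq_zero h)
  have := G.dist_le (p.takeUntil a ha)
  omega

lemma IsCycle.exists_mem_edges_ne {a v : V} {c : G.Walk a a} (hc : c.IsCycle)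
    (hv : v ∈ c.support) (e : Sym2 V) : ∃ w, s(v, w) ∈ c.edges ∧ s(v, w) ≠ e := by
  classical
  have hc' := hc.rotate hv
  have hrot := c.rotate_edges v hv
  have hsnd : s(v, (c.rotate v hv).snd) ∈ c.edges :=
    hrot.mem_iff.mp ((c.rotate v hv).mk_start_snd_mem_edges hc'.not_nil)
  have hpen : s(v, (c.rotate v hv).penultimate) ∈ c.edges := by
    rw [Sym2.eq_swap]
    exact hrot.mem_iff.mp ((c.rotate v hv).mk_penultimate_end_mem_edges hc'.not_nil)
  by_cases h : s(v, (c.rotate v hv).snd) = e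
  · exact ⟨_, hpen, fun h' => hc'.snd_ne_penultimate (Sym2.congr_right.mp (h.trans h'.symm))⟩
  · exact ⟨_, hsnd, h⟩

end Walk

/-- Induction on `d(x, y)`: the last step of a shortest walk from `x` to `y` is the deleted edge
only when `y` is `u` or `v`. -/
lemma exists_walk_deleteEdges_length_le_dist {x u v : V}
    (hu : ∃ p : (G.deleteEdges {s(u, v)}).Walk x u, p.length ≤ G.dist x u)
    (hv : ∃ p : (G.deleteEdges {s(u, v)}).Walk x v, p.length ≤ G.dist x v) (n : ℕ) :
    ∀ y, G.Reachable x y → G.dist x y = n →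
      ∃ p : (G.deleteEdges {s(u, v)}).Walk x y, p.length ≤ n := by
  induction n with
  | zero =>
    intro y hxy hn
    obtain rfl : x = y := hxy.dist_eq_zero_iff.mp hn
    exact ⟨Walk.nil, le_rfl⟩
  | succ n ih =>
    intro y hxy hn
    obtain ⟨p, hp⟩ := hxy.symm.exists_walk_length_eq_dist
    cases p with
    | nil => simp at hn
    | @cons _ z _ hyz q =>
      have hq : q.length = G.dist z x :=
        length_eq_dist_of_subwalk hp (q.isSubwalk_cons hyz)
      rw [dist_comm, hn, Walk.length_cons] at hp
      obtain ⟨r, hr⟩ := ih z q.reverse.reachable (by rw [dist_comm]; omega)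
      by_cases he : s(z, y) = s(u, v)
      · rcases Sym2.eq_iff.mp he with ⟨-, rfl⟩ | ⟨-, rfl⟩
        · exact hn ▸ hv
        · exact hn ▸ hu
      · exact ⟨r.concat (deleteEdges_adj.mpr ⟨hyz.symm, he⟩), by simp; omega⟩

lemma dist_deleteEdges_eq_of_endpoints {x u v : V}
    (hu : ∃ p : (G.deleteEdges {s(u, v)}).Walk x u, p.length ≤ G.dist x u)
    (hv : ∃ p : (G.deleteEdges {s(u, v)}).Walk x v, p.length ≤ G.dist x v) (y : V) :
    (G.deleteEdges {s(u, v)}).dist x y = G.dist x y := by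
  by_cases hxy : G.Reachable x y
  · obtain ⟨p, hp⟩ := exists_walk_deleteEdges_length_le_dist hu hv _ y hxy rfl
    exact le_antisymm ((dist_le p).trans hp) (p.reachable.dist_anti (G.deleteEdges_le _))
  · rw [dist_eq_zero_of_not_reachable hxy,
      dist_eq_zero_of_not_reachable fun h => hxy (h.mono (G.deleteEdges_le _))]

lemma exists_walk_deleteEdges_length_le_of_isCycle (hG : G.Connected) {x u v a : V}
    {c : G.Walk a a} (hc : c.IsCycle) (huv : s(u, v) ∈ c.edges)
    (hmax : ∀ p q, s(p, q) ∈ c.edges → G.dist x p + G.dist x q ≤ G.dist x u + G.dist x v) :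
    ∃ p : (G.deleteEdges {s(u, v)}).Walk x v, p.length ≤ G.dist x v := by
  obtain ⟨p, hp⟩ := hG.exists_walk_length_eq_dist x v
  by_cases hep : s(u, v) ∉ p.edges
  · exact ⟨p.toDeleteEdge _ hep, by simp [hp]⟩
  have hxu : G.dist x u < G.dist x v := hp ▸ p.dist_lt_length_of_mem_support
    (p.fst_mem_support_of_mem_edges (not_not.mp hep)) (c.adj_of_mem_edges huv).ne
  obtain ⟨w, hvw, hwe⟩ := hc.exists_mem_edges_ne (c.snd_mem_support_of_mem_edges huv) s(u, v)
  have hxw : G.dist x w ≤ G.dist x u := by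
    have := hmax v w hvw
    omega
  obtain ⟨r, hr⟩ := hG.exists_walk_length_eq_dist x w
  have her : s(u, v) ∉ r.edges := fun h => by
    have := r.dist_lt_length_of_mem_support (r.snd_mem_support_of_mem_edges h)
      (c.adj_of_mem_edges hvw).ne
    omega
  have hwv : (G.deleteEdges {s(u, v)}).Adj w v :=
    deleteEdges_adj.mpr ⟨(c.adj_of_mem_edges hvw).symm, by rw [Set.mem_singleton_iff, Sym2.eq_swap]; exact hwe⟩
  exact ⟨(r.toDeleteEdge _ her).concat hwv, by simp; omega⟩

lemma Connected.exists_mem_edges_forall_dist_deleteEdges_eq (hG : G.Connected) (x : V)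
    {a : V} {c : G.Walk a a} (hc : c.IsCycle) :
    ∃ e ∈ c.edges, ∀ y, (G.deleteEdges {e}).dist x y = G.dist x y := by
  classical
  have hne : c.edges.toFinset.Nonempty := by
    simpa [List.toFinset_nonempty_iff] using hc.not_nil
  obtain ⟨e, he, hmax⟩ := c.edges.toFinset.exists_max_image
    (Sym2.lift ⟨fun p q => G.dist x p + G.dist x q, fun p q => add_comm _ _⟩) hne
  induction e with | h u v => ?_
  rw [List.mem_toFinset] at he
  have hmax' : ∀ p q, s(p, q) ∈ c.edges → G.dist x p + G.dist x q ≤ G.dist x u + G.dist x v :=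
    fun p q hpq => by simpa using hmax s(p, q) (List.mem_toFinset.mpr hpq)
  have hv := exists_walk_deleteEdges_length_le_of_isCycle hG hc he hmax'
  have hu := exists_walk_deleteEdges_length_le_of_isCycle hG hc (Sym2.eq_swap ▸ he)
    (fun p q hpq => add_comm (G.dist x u) _ ▸ hmax' p q hpq)
  rw [Sym2.eq_swap] at hu
  exact ⟨s(u, v), he, dist_deleteEdges_eq_of_endpoints hu hv⟩

end SimpleGraph

open SimpleGraph

lemma not_demSet_empty {V : Type*} {G : SimpleGraph V} (he : G.edgeSet.Nonempty) :
    ¬ demSet G ∅ := fun h => by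
  obtain ⟨e, he⟩ := he
  obtain ⟨x, hx, -⟩ := h e he
  exact hx

lemma demSet_singleton_of_isAcyclic {V : Type*} {G : SimpleGraph V} (hG : G.Connected)
    (hG' : G.IsAcyclic) (x : V) : demSet G {x} := by
  intro e he
  induction e with | h u v => ?_
  have hbr : ¬(G.deleteEdges {s(u, v)}).Reachable u v := isAcyclic_iff_forall_adj_isBridge.mp hG' he
  have hmon : ∀ y, ¬(G.deleteEdges {s(u, v)}).Reachable x y →
      G.dist x y ≠ (G.deleteEdges {s(u, v)}).dist x y := fun y hy => by
    rw [dist_eq_zero_of_not_reachable hy]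
    exact (hG.pos_dist_of_ne (by rintro rfl; exact hy (Reachable.refl _))).ne'
  by_cases hxu : (G.deleteEdges {s(u, v)}).Reachable x u
  · exact ⟨x, rfl, v, hmon v fun hxv => hbr (hxu.symm.trans hxv)⟩
  · exact ⟨x, rfl, u, hmon u hxu⟩

lemma isAcyclic_of_demSet_singleton {V : Type*} {G : SimpleGraph V} (hG : G.Connected) {x : V}
    (hx : demSet G {x}) : G.IsAcyclic := fun _ c hc => by
  obtain ⟨e, he, hdist⟩ := hG.exists_mem_edges_forall_dist_deleteEdges_eq x hc
  obtain ⟨x', rfl, y, hy⟩ := hx e (c.edges_subset_edgeSet he)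
  exact hy (hdist y).symm

lemma dem_eq_one_iff {V : Type*} [Fintype V] {G : SimpleGraph V} (he : G.edgeSet.Nonempty) :
    dem G = 1 ↔ ∃ x, demSet G {x} := by
  constructor
  · intro h
    obtain ⟨M, hM, hdem⟩ := Nat.sInf_mem (Nat.nonempty_of_pos_sInf (h ▸ one_pos : 0 < dem G))
    change M.card = dem G at hM
    rw [h] at hM
    obtain ⟨x, rfl⟩ := Finset.card_eq_one.mp hM
    exact ⟨x, by simpa using hdem⟩
  · rintro ⟨x, hx⟩
    refine le_antisymm (Nat.sInf_le ⟨{x}, by simp, by simpa using hx⟩) ?_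
    rw [Nat.one_le_iff_ne_zero, Ne, dem, Nat.sInf_eq_zero]
    rintro (⟨M, hM, hdem⟩ | hempty)
    · rw [Finset.card_eq_zero.mp hM, Finset.coe_empty] at hdem
      exact not_demSet_empty he hdem
    · exact Set.eq_empty_iff_forall_notMem.mp hempty 1 ⟨{x}, by simp, by simpa using hx⟩

theorem stmt_8 {V : Type*} [Fintype V] (G : SimpleGraph V) (hG : G.Connected)
    (he : G.edgeSet.Nonempty) :
    dem G = 1 ↔ G.IsTree := by
  rw [dem_eq_one_iff he]
  constructor
  · rintro ⟨x, hx⟩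
    exact ⟨hG, isAcyclic_of_demSet_singleton hG hx⟩
  · intro hT
    obtain ⟨x⟩ := hG.nonempty
    exact ⟨x, demSet_singleton_of_isAcyclic hG hT.isAcyclic x⟩
end

section
/- In G □ H, for any set M ⊆ V(G□H) and any edge e = (u_i,v_j)(u_i,v_{j'}) of the copy H_i of H (i.e., an H-layer edge), P_{G□H}(M, e) = P_{H_i}(M ∩ V(H_i), e), where H_i is the subgraph induced by {(u_i,v) : v ∈ V(H)}. Symmetrically for G-layer edges. -/
open SimpleGraph

/-- `Pset F M e` is the set of pairs `(x, y)` with `x ∈ M` such that deleting the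
edge `e` changes the distance from `x` to `y`. -/
def Pset {α : Type*} (F : SimpleGraph α) (M : Set α) (e : Sym2 α) : Set (α × α) :=
  {p | p.1 ∈ M ∧ F.dist p.1 p.2 ≠ (F.deleteEdges {e}).dist p.1 p.2}

/-! Deleting an edge `e` leaves `d(x, y)` unchanged iff some shortest `x`-`y` walk avoids `e`.
Distances in `G □ H` add over the factors; let `e` be an edge of the layer `H_u`. If an endpoint `x`
lies outside `H_u`, the shortest walk that takes its `H`-steps in the layer of `x` and then its
`G`-steps along a `G`-layer avoids `e`. Between two vertices of `H_u`, a walk that leaves the layer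
has length at least `d_H + 2`, so the shortest walks are exactly the lifts of shortest walks of `H`,
and such a lift avoids `e` iff the walk of `H` avoids the corresponding edge. The `G`-layer case
follows through `G □ H ≃g H □ G`. -/

namespace SimpleGraph

section Metric

variable {α β : Type*} {A : SimpleGraph α} {B : SimpleGraph β}

lemma Reachable.dist_map_le (f : A →g B) {x y : α} (h : A.Reachable x y) :
    B.dist (f x) (f y) ≤ A.dist x y := by
  obtain ⟨p, hp⟩ := h.exists_walk_length_eq_dist
  simpa [hp] using dist_le (p.map f)

lemma Iso.dist_map (f : A ≃g B) (x y : α) : B.dist (f x) (f y) = A.dist x y := by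
  by_cases h : A.Reachable x y
  · refine le_antisymm (h.dist_map_le f.toHom) ?_
    simpa using ((Iso.reachable_iff (φ := f)).mpr h).dist_map_le f.symm.toHom
  · rw [dist_eq_zero_of_not_reachable h,
      dist_eq_zero_of_not_reachable (mt Iso.reachable_iff.mp h)]

def Iso.deleteEdges (f : A ≃g B) (s : Set (Sym2 α)) :
    A.deleteEdges s ≃g B.deleteEdges (Sym2.map f '' s) where
  toEquiv := f.toEquiv
  map_rel_iff' := by
    intro x y
    simp [(Sym2.map.injective f.injective).mem_set_image, ← Sym2.map_mk, f.map_adj_iff]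

lemma Iso.dist_deleteEdges_map (f : A ≃g B) (s : Set (Sym2 α)) (x y : α) :
    (B.deleteEdges (Sym2.map f '' s)).dist (f x) (f y) = (A.deleteEdges s).dist x y :=
  (f.deleteEdges s).dist_map x y

lemma dist_deleteEdges_eq_of_not_reachable {s : Set (Sym2 α)} {x y : α}
    (h : ¬A.Reachable x y) : (A.deleteEdges s).dist x y = A.dist x y := by
  rw [dist_eq_zero_of_not_reachable h,
    dist_eq_zero_of_not_reachable (mt (Reachable.mono (deleteEdges_le s)) h)]

lemma Reachable.dist_deleteEdges_singleton_eq_iff {e : Sym2 α} {x y : α} (h : A.Reachable x y) :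
    (A.deleteEdges {e}).dist x y = A.dist x y ↔
      ∃ p : A.Walk x y, p.length = A.dist x y ∧ e ∉ p.edges := by
  constructor
  · intro hd
    by_cases hxy : x = y
    · subst hxy
      exact ⟨.nil, by simp, by simp⟩
    have hr : (A.deleteEdges {e}).Reachable x y :=
      Reachable.of_dist_ne_zero (hd ▸ (h.pos_dist_of_ne hxy).ne')
    obtain ⟨q, hq⟩ := hr.exists_walk_length_eq_dist
    refine ⟨q.mapLe (deleteEdges_le {e}), by simp [hq, hd], fun he => ?_⟩
    rw [Walk.edges_mapLe_eq_edges] at he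
    simpa using q.edges_subset_edgeSet he
  · rintro ⟨p, hp, he⟩
    refine le_antisymm ?_ ((p.toDeleteEdge e he).reachable.dist_anti (deleteEdges_le {e}))
    simpa [hp] using dist_le (p.toDeleteEdge e he)

end Metric

section BoxProd

variable {V W : Type*} {G : SimpleGraph V} {H : SimpleGraph W}

lemma Reachable.dist_boxProd {x y : V × W} (h : (G □ H).Reachable x y) :
    (G □ H).dist x y = G.dist x.1 y.1 + H.dist x.2 y.2 := by
  obtain ⟨hG, hH⟩ := reachable_boxProd.mp h
  rw [dist, edist_boxProd, ENat.toNat_add (edist_ne_top_iff_reachable.mpr hG)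
    (edist_ne_top_iff_reachable.mpr hH)]
  rfl

lemma Walk.length_boxProdRight (a : V) {b₁ b₂ : W} (p : H.Walk b₁ b₂) :
    (p.boxProdRight G a).length = p.length :=
  Walk.length_map _ _

lemma Walk.edges_boxProdRight (a : V) {b₁ b₂ : W} (p : H.Walk b₁ b₂) :
    (p.boxProdRight G a).edges = p.edges.map (Sym2.map fun b => (a, b)) :=
  Walk.edges_map _ _

lemma Walk.length_boxProdLeft (b : W) {a₁ a₂ : V} (p : G.Walk a₁ a₂) :
    (p.boxProdLeft H b).length = p.length :=
  Walk.length_map _ _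

lemma Walk.edges_boxProdLeft (b : W) {a₁ a₂ : V} (p : G.Walk a₁ a₂) :
    (p.boxProdLeft H b).edges = p.edges.map (Sym2.map fun a => (a, b)) :=
  Walk.edges_map _ _

lemma Walk.mem_edges_boxProdRight_iff (a : V) {b₁ b₂ : W} (p : H.Walk b₁ b₂) (b b' : W) :
    s((a, b), (a, b')) ∈ (p.boxProdRight G a).edges ↔ s(b, b') ∈ p.edges := by
  have hinj : Function.Injective (Sym2.map fun w : W => (a, w)) :=
    Sym2.map.injective fun _ _ h => congrArg Prod.snd h
  rw [edges_boxProdRight, ← List.mem_map_of_injective hinj]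
  rfl

lemma Walk.fst_eq_of_mem_edges_boxProdRight (a : V) {b₁ b₂ : W} (p : H.Walk b₁ b₂)
    {e : Sym2 (V × W)} (he : e ∈ (p.boxProdRight G a).edges) {z : V × W} (hz : z ∈ e) :
    z.1 = a := by
  rw [edges_boxProdRight, List.mem_map] at he
  obtain ⟨e', -, rfl⟩ := he
  obtain ⟨b, -, rfl⟩ := Sym2.mem_map.mp hz
  rfl

lemma Walk.snd_eq_of_mem_edges_boxProdLeft (b : W) {a₁ a₂ : V} (p : G.Walk a₁ a₂)
    {e : Sym2 (V × W)} (he : e ∈ (p.boxProdLeft H b).edges) {z : V × W} (hz : z ∈ e) :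
    z.2 = b := by
  rw [edges_boxProdLeft, List.mem_map] at he
  obtain ⟨e', -, rfl⟩ := he
  obtain ⟨a, -, rfl⟩ := Sym2.mem_map.mp hz
  rfl

lemma Walk.exists_edges_boxProdRight_eq_of_length_lt {u : V} {x y : V × W}
    (w : (G □ H).Walk x y) (hx : x.1 = u) (hy : y.1 = u) (hw : w.length < H.dist x.2 y.2 + 2) :
    ∃ p : H.Walk x.2 y.2, (p.boxProdRight G u).edges = w.edges := by
  induction w with
  | nil => exact ⟨.nil, rfl⟩
  | @cons a z c h q ih =>
    rw [length_cons] at hw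
    rcases boxProd_adj.mp h with ⟨hGadj, hz⟩ | ⟨hHadj, hz⟩
    · rw [hz] at hw
      have hq := (q.reachable.dist_boxProd).symm.trans_le (dist_le q)
      have hzc : 0 < G.dist z.1 c.1 :=
        (reachable_boxProd.mp q.reachable).1.pos_dist_of_ne (by rw [hy, ← hx]; exact hGadj.ne.symm)
      omega
    · have htri := hHadj.reachable.dist_triangle_left c.2
      rw [dist_eq_one_iff_adj.mpr hHadj] at htri
      obtain ⟨p, hp⟩ := ih (hz ▸ hx) hy (by omega)
      refine ⟨.cons hHadj p, ?_⟩
      rw [edges_boxProdRight] at hp ⊢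
      rw [edges_cons, edges_cons, ← hp, List.map_cons, Sym2.map_mk]
      congr 2 <;> ext <;> simp [hx, ← hz]

lemma Reachable.exists_walk_length_eq_dist_notMem_edges {u : V} {v v' : W} (hv : v ≠ v')
    {x y : V × W} (h : (G □ H).Reachable x y) (hx : x.1 ≠ u) :
    ∃ p : (G □ H).Walk x y, p.length = (G □ H).dist x y ∧ s((u, v), (u, v')) ∉ p.edges := by
  obtain ⟨hG, hH⟩ := reachable_boxProd.mp h
  obtain ⟨pG, hpG⟩ := hG.exists_walk_length_eq_dist
  obtain ⟨pH, hpH⟩ := hH.exists_walk_length_eq_dist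
  refine ⟨(pH.boxProdRight G x.1).append (pG.boxProdLeft H y.2), ?_, ?_⟩
  · rw [Walk.length_append, Walk.length_boxProdRight, Walk.length_boxProdLeft, hpG, hpH,
      h.dist_boxProd, add_comm]
  · rw [Walk.edges_append, List.mem_append, not_or]
    constructor
    · exact fun he => hx (Walk.fst_eq_of_mem_edges_boxProdRight _ _ he (Sym2.mem_mk_left _ _)).symm
    · intro he
      exact hv ((Walk.snd_eq_of_mem_edges_boxProdLeft _ _ he (Sym2.mem_mk_left _ _)).trans
        (Walk.snd_eq_of_mem_edges_boxProdLeft _ _ he (Sym2.mem_mk_right _ _)).symm)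

lemma dist_deleteEdges_layer_of_fst_ne {u : V} {v v' : W} (hv : v ≠ v') {x y : V × W}
    (hxy : x.1 ≠ u ∨ y.1 ≠ u) :
    ((G □ H).deleteEdges {s((u, v), (u, v'))}).dist x y = (G □ H).dist x y := by
  wlog hx : x.1 ≠ u generalizing x y
  · have hy := hxy.resolve_left hx
    rw [dist_comm, this (.inl hy) hy, dist_comm]
  by_cases h : (G □ H).Reachable x y
  · exact h.dist_deleteEdges_singleton_eq_iff.mpr
      (h.exists_walk_length_eq_dist_notMem_edges hv hx)
  · exact dist_deleteEdges_eq_of_not_reachable h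

lemma dist_deleteEdges_layer_eq_iff (u : V) {v v' : W} (b d : W) :
    ((G □ H).deleteEdges {s((u, v), (u, v'))}).dist (u, b) (u, d) = (G □ H).dist (u, b) (u, d) ↔
      (H.deleteEdges {s(v, v')}).dist b d = H.dist b d := by
  by_cases h : H.Reachable b d
  · have hF : (G □ H).Reachable (u, b) (u, d) := reachable_boxProd.mpr ⟨.rfl, h⟩
    have hdist : (G □ H).dist (u, b) (u, d) = H.dist b d := by simp [hF.dist_boxProd]
    rw [hF.dist_deleteEdges_singleton_eq_iff, h.dist_deleteEdges_singleton_eq_iff, hdist]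
    constructor
    · rintro ⟨w, hw, he⟩
      obtain ⟨p, hp⟩ :=
        w.exists_edges_boxProdRight_eq_of_length_lt rfl rfl (by dsimp only; omega)
      refine ⟨p, ?_, fun he' => he ?_⟩
      · rw [← hw, ← Walk.length_edges w, ← hp, Walk.length_edges, Walk.length_boxProdRight]
      · exact hp ▸ (Walk.mem_edges_boxProdRight_iff u p v v').mpr he'
    · rintro ⟨p, hp, he⟩
      refine ⟨p.boxProdRight G u, by rw [Walk.length_boxProdRight, hp], fun he' => he ?_⟩
      exact (Walk.mem_edges_boxProdRight_iff u p v v').mp he'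
  · have hF : ¬(G □ H).Reachable (u, b) (u, d) := fun hF => h (reachable_boxProd.mp hF).2
    exact iff_of_true (dist_deleteEdges_eq_of_not_reachable hF)
      (dist_deleteEdges_eq_of_not_reachable h)

lemma dist_deleteEdges_layer_ne_iff {u : V} {v v' : W} (hv : v ≠ v') (x y : V × W) :
    (G □ H).dist x y ≠ ((G □ H).deleteEdges {s((u, v), (u, v'))}).dist x y ↔
      x.1 = u ∧ y.1 = u ∧ H.dist x.2 y.2 ≠ (H.deleteEdges {s(v, v')}).dist x.2 y.2 := by
  by_cases hxy : x.1 = u ∧ y.1 = u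
  · obtain ⟨a, b⟩ := x
    obtain ⟨c, d⟩ := y
    obtain ⟨rfl, rfl⟩ := hxy
    simpa only [true_and, ne_eq, eq_comm] using (dist_deleteEdges_layer_eq_iff (G := G) _ b d).not
  · rw [dist_deleteEdges_layer_of_fst_ne hv (not_and_or.mp hxy)]
    tauto

lemma dist_deleteEdges_layer_ne_iff' {v : W} {u u' : V} (hu : u ≠ u') (x y : V × W) :
    (G □ H).dist x y ≠ ((G □ H).deleteEdges {s((u, v), (u', v))}).dist x y ↔
      x.2 = v ∧ y.2 = v ∧ G.dist x.1 y.1 ≠ (G.deleteEdges {s(u, u')}).dist x.1 y.1 := by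
  have hF := (boxProdComm G H).dist_map x y
  have hD := (boxProdComm G H).dist_deleteEdges_map {s((u, v), (u', v))} x y
  rw [Set.image_singleton, Sym2.map_mk] at hD
  rw [← hF, ← hD]
  exact dist_deleteEdges_layer_ne_iff hu x.swap y.swap

end BoxProd

end SimpleGraph

section Pset

variable {V W : Type*} {G : SimpleGraph V} {H : SimpleGraph W}

lemma Pset_boxProd_layer (M : Set (V × W)) {u : V} {v v' : W} (hv : v ≠ v') :
    Pset (G □ H) M s((u, v), (u, v')) =
      (fun q : W × W => ((u, q.1), (u, q.2))) '' Pset H {w | (u, w) ∈ M} s(v, v') := by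
  ext ⟨x, y⟩
  simp only [Pset, Set.mem_ofPred_eq, Set.mem_image, dist_deleteEdges_layer_ne_iff hv]
  aesop

lemma Pset_boxProd_layer' (M : Set (V × W)) {v : W} {u u' : V} (hu : u ≠ u') :
    Pset (G □ H) M s((u, v), (u', v)) =
      (fun q : V × V => ((q.1, v), (q.2, v))) '' Pset G {a | (a, v) ∈ M} s(u, u') := by
  ext ⟨x, y⟩
  simp only [Pset, Set.mem_ofPred_eq, Set.mem_image, dist_deleteEdges_layer_ne_iff' hu]
  aesop

end Pset

theorem stmt_11_general {V W : Type*} (G : SimpleGraph V) (H : SimpleGraph W)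
    (M : Set (V × W)) :
    (∀ (u : V) (v v' : W), H.Adj v v' →
      Pset (G □ H) M s((u, v), (u, v')) =
        (fun q : W × W => ((u, q.1), (u, q.2))) '' Pset H {w | (u, w) ∈ M} s(v, v')) ∧
    (∀ (v : W) (u u' : V), G.Adj u u' →
      Pset (G □ H) M s((u, v), (u', v)) =
        (fun q : V × V => ((q.1, v), (q.2, v))) '' Pset G {a | (a, v) ∈ M} s(u, u')) :=
  ⟨fun _ _ _ h => Pset_boxProd_layer M h.ne, fun _ _ _ h => Pset_boxProd_layer' M h.ne⟩

theorem stmt_11 {V W : Type*} (G : SimpleGraph V) (H : SimpleGraph W)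
    (hG : G.Connected) (hH : H.Connected) (M : Set (V × W)) :
    (∀ (u : V) (v v' : W), H.Adj v v' →
      Pset (G □ H) M s((u, v), (u, v')) =
        (fun q : W × W => ((u, q.1), (u, q.2))) '' Pset H {w | (u, w) ∈ M} s(v, v')) ∧
    (∀ (v : W) (u u' : V), G.Adj u u' →
      Pset (G □ H) M s((u, v), (u', v)) =
        (fun q : V × V => ((q.1, v), (q.2, v))) '' Pset G {a | (a, v) ∈ M} s(u, u')) :=
  stmt_11_general G H M
end
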